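/- arXiv:2501.11987 — 7 statements merged into one kernel-verified Lean document; each statement's English description precedes it below -/
import Mathlib

section
/- Let n ∈ ℕ and x, λ ∈ ℝ satisfy x ≠ kλ for every integer k with −(n−1) ≤ k ≤ n−1. For each t = 1, …, n let F_t be the (n+1)×(n+1) lower bidiagonal matrix with ones on the diagonal, subdiagonal entries (F_t)_{r,r−1} = x + (2t−r)λ for r = t+1, …, n+1, (F_t)_{r,r−1} = 0 for r ≤ t, and zeros elsewhere. Then P_{n,λ}[x] = F_n F_{n−1} ⋯ F_1; that is, the bidiagonal decomposition of P_{n,λ}[x] has all diagonal pivots equal to 1 and multipliers m_{ij} = x + (i−2j)λ for i > j. -/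
/-- `genPow x lam m` is the generalized power `x^{m|λ} = x(x+λ)⋯(x+(m−1)λ)`,
with `x^{0|λ} = 1`. -/
noncomputable def genPow (x lam : ℝ) (m : ℕ) : ℝ :=
  ∏ t ∈ Finset.range m, (x + t * lam)

/-- The generalized lower triangular Pascal matrix `P_{n,λ}[x]`, indexed by
`Fin (n+1)` (0-based indices, so entry `(i,j)` corresponds to math entry
`(i+1, j+1)`): `(P_{n,λ}[x])_{ij} = x^{(i−j)|λ}·binom(i−1,j−1)` for `j ≤ i`,
and `0` otherwise. -/
noncomputable def genPascal (n : ℕ) (x lam : ℝ) :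
    Matrix (Fin (n + 1)) (Fin (n + 1)) ℝ :=
  fun i j =>
    if (j : ℕ) ≤ (i : ℕ) then
      genPow x lam ((i : ℕ) - (j : ℕ)) * ((i : ℕ).choose (j : ℕ)) else 0

/-- The lower bidiagonal matrix `F_t` (for math index `t`): ones on the
diagonal, entry at math position `(r, r−1)` equal to `x + (2t−r)λ` for
`r = t+1, …, n+1`, zero for `r ≤ t`, and zeros elsewhere.  In the 0-based
indexing, row `i` corresponds to `r = i+1`. -/
noncomputable def Fmat (n : ℕ) (x lam : ℝ) (t : ℕ) :
    Matrix (Fin (n + 1)) (Fin (n + 1)) ℝ :=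
  fun i j =>
    if (i : ℕ) = (j : ℕ) then 1
    else if (i : ℕ) = (j : ℕ) + 1 ∧ t ≤ (i : ℕ) then
      x + (2 * (t : ℝ) - ((i : ℕ) + 1)) * lam
    else 0

noncomputable def Qmat (n : ℕ) (x lam : ℝ) (t : ℕ) :
    Matrix (Fin (n + 1)) (Fin (n + 1)) ℝ :=
  fun i j =>
    if t ≤ (j : ℕ) ∧ (j : ℕ) ≤ (i : ℕ) then
      genPow (x + t * lam) lam ((i : ℕ) - (j : ℕ)) *
        (((i : ℕ) - t).choose ((j : ℕ) - t))
    else if (i : ℕ) = (j : ℕ) then 1 else 0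

lemma genPow_zero (x lam : ℝ) : genPow x lam 0 = 1 := by simp [genPow]

lemma genPow_succ_right (x lam : ℝ) (m : ℕ) :
    genPow x lam (m + 1) = genPow x lam m * (x + m * lam) :=
  Finset.prod_range_succ _ _

lemma genPow_succ_left (x lam : ℝ) (m : ℕ) :
    genPow x lam (m + 1) = x * genPow (x + lam) lam m := by
  rw [genPow, Finset.prod_range_succ', genPow]
  simp only [Nat.cast_zero, zero_mul, add_zero]
  rw [mul_comm]
  congr 1
  apply Finset.prod_congr rfl
  intro k _
  push_cast
  ring

lemma key_id (y lam : ℝ) (a b : ℕ) (hb : 1 ≤ b) (hab : b < a) :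
    y * ((a.choose b : ℕ) : ℝ)
      = (y + ((a : ℝ) - b) * lam) * (((a - 1).choose (b - 1) : ℕ) : ℝ)
        + (y - (b : ℝ) * lam) * (((a - 1).choose b : ℕ) : ℝ) := by
  obtain ⟨a', rfl⟩ : ∃ a', a = a' + 1 := ⟨a - 1, by omega⟩
  obtain ⟨b', rfl⟩ : ∃ b', b = b' + 1 := ⟨b - 1, by omega⟩
  simp only [Nat.add_sub_cancel]
  have hble : b' ≤ a' := by omega
  have hpascal : (a' + 1).choose (b' + 1) = a'.choose b' + a'.choose (b' + 1) :=
    Nat.choose_succ_succ a' b'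
  have hmul : a'.choose (b' + 1) * (b' + 1) = a'.choose b' * (a' - b') :=
    Nat.choose_succ_right_eq a' b'
  have hmulR : ((a'.choose (b' + 1) * (b' + 1) : ℕ) : ℝ)
      = ((a'.choose b' * (a' - b') : ℕ) : ℝ) := Nat.cast_inj.mpr hmul
  push_cast [Nat.cast_sub hble] at hmulR
  rw [hpascal]
  push_cast
  linear_combination lam * hmulR

lemma mul_Fmat (n : ℕ) (x lam : ℝ) (s : ℕ)
    (A : Matrix (Fin (n + 1)) (Fin (n + 1)) ℝ) (i j : Fin (n + 1)) :
    (A * Fmat n x lam s) i j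
      = A i j + (if h : (j : ℕ) + 1 ≤ n ∧ s ≤ (j : ℕ) + 1 then
          A i ⟨(j : ℕ) + 1, by omega⟩ *
            (x + (2 * (s : ℝ) - ((j : ℕ) + 1 + 1)) * lam) else 0) := by
  rw [Matrix.mul_apply]
  by_cases h : (j : ℕ) + 1 ≤ n ∧ s ≤ (j : ℕ) + 1
  · rw [dif_pos h]
    have hsum : ∀ k : Fin (n + 1), A i k * Fmat n x lam s k j
        = (if k = j then A i j else 0)
          + (if k = (⟨(j : ℕ) + 1, by omega⟩ : Fin (n + 1)) then
              A i (⟨(j : ℕ) + 1, by omega⟩ : Fin (n + 1)) *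
                (x + (2 * (s : ℝ) - ((j : ℕ) + 1 + 1)) * lam) else 0) := by
      intro k
      by_cases hkj : k = j
      · have h1 : (k : ℕ) = (j : ℕ) := by rw [hkj]
        have h2 : ¬ (k = (⟨(j : ℕ) + 1, by omega⟩ : Fin (n + 1))) := by
          intro hh
          have : (k : ℕ) = (j : ℕ) + 1 := by rw [hh]
          omega
        rw [if_pos hkj, if_neg h2, add_zero, hkj]
        simp [Fmat]
      · by_cases hkj' : k = (⟨(j : ℕ) + 1, by omega⟩ : Fin (n + 1))
        · have hv : (k : ℕ) = (j : ℕ) + 1 := by rw [hkj']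
          rw [if_neg hkj, if_pos hkj', ← hkj', zero_add]
          have h1 : ¬ ((k : ℕ) = (j : ℕ)) := by omega
          have h2 : (k : ℕ) = (j : ℕ) + 1 ∧ s ≤ (k : ℕ) := ⟨hv, by omega⟩
          simp only [Fmat, if_neg h1, if_pos h2]
          have hvR : ((k : ℕ) : ℝ) = ((j : ℕ) : ℝ) + 1 := by exact_mod_cast hv
          rw [hvR]
        · have h1 : ¬ ((k : ℕ) = (j : ℕ)) := fun hh => hkj (Fin.ext hh)
          have h2 : ¬ ((k : ℕ) = (j : ℕ) + 1 ∧ s ≤ (k : ℕ)) := by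
            rintro ⟨hk1, _⟩
            exact hkj' (Fin.ext hk1)
          simp [Fmat, h1, h2, hkj, hkj']
    rw [Finset.sum_congr rfl (fun k _ => hsum k), Finset.sum_add_distrib,
      Finset.sum_ite_eq', Finset.sum_ite_eq']
    simp
  · rw [dif_neg h]
    have hsum : ∀ k : Fin (n + 1), A i k * Fmat n x lam s k j
        = if k = j then A i j else 0 := by
      intro k
      by_cases hkj : k = j
      · rw [if_pos hkj, hkj]; simp [Fmat]
      · have h1 : ¬ ((k : ℕ) = (j : ℕ)) := fun hh => hkj (Fin.ext hh)
        have h2 : ¬ ((k : ℕ) = (j : ℕ) + 1 ∧ s ≤ (k : ℕ)) := by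
          rintro ⟨hk1, hk2⟩
          have := k.isLt
          exact h ⟨by omega, by omega⟩
        simp [Fmat, h1, h2, hkj]
    rw [Finset.sum_congr rfl (fun k _ => hsum k), Finset.sum_ite_eq']
    simp

lemma Qmat_step (n : ℕ) (x lam : ℝ) (t : ℕ) :
    Qmat n x lam t = Qmat n x lam (t + 1) * Fmat n x lam (t + 1) := by
  ext i j
  rw [mul_Fmat]
  have hi := i.isLt
  have hj := j.isLt
  rcases lt_trichotomy ((j : ℕ)) ((i : ℕ)) with hji | hji | hji
  · -- j < i
    by_cases htj : t ≤ (j : ℕ)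
    · -- main case
      have hjn : (j : ℕ) + 1 ≤ n := by omega
      rw [dif_pos ⟨hjn, by omega⟩]
      have hQj' : Qmat n x lam (t + 1) i ⟨(j : ℕ) + 1, by omega⟩
          = genPow (x + ((t : ℝ) + 1) * lam) lam ((i : ℕ) - ((j : ℕ) + 1)) *
            ((((i : ℕ) - (t + 1)).choose (((j : ℕ) + 1) - (t + 1))) : ℕ) := by
        simp only [Qmat]
        rw [if_pos (show t + 1 ≤ (j : ℕ) + 1 ∧ (j : ℕ) + 1 ≤ (i : ℕ) by omega)]
        push_cast
        ring_nf
      rw [hQj']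
      rcases Nat.eq_or_lt_of_le htj with htj' | htj'
      · -- j = t
        have hQj : Qmat n x lam (t + 1) i j = 0 := by
          simp only [Qmat]
          rw [if_neg (by omega), if_neg (by omega)]
        rw [hQj, zero_add]
        have hL : Qmat n x lam t i j
            = genPow (x + (t : ℝ) * lam) lam ((i : ℕ) - t) := by
          simp only [Qmat]
          rw [if_pos ⟨by omega, by omega⟩]
          rw [show (j : ℕ) - t = 0 by omega, show (j : ℕ) = t by omega]
          simp
        rw [hL]
        rw [show (i : ℕ) - ((j : ℕ) + 1) = (i : ℕ) - t - 1 by omega,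
          show ((j : ℕ) + 1) - (t + 1) = 0 by omega,
          show (i : ℕ) - t = ((i : ℕ) - t - 1) + 1 by omega]
        rw [genPow_succ_left]
        rw [show (j : ℕ) = t by omega]
        simp only [Nat.choose_zero_right, Nat.cast_one, mul_one]
        have he : x + (t : ℝ) * lam + lam = x + ((t : ℝ) + 1) * lam := by ring
        rw [he]
        push_cast
        ring
      · -- t < j
        set a := (i : ℕ) - t with ha
        set b := (j : ℕ) - t with hb
        have hb1 : 1 ≤ b := by omega
        have hab : b < a := by omega
        have hQj : Qmat n x lam (t + 1) i j
            = genPow (x + ((t : ℝ) + 1) * lam) lam (a - b) *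
              (((a - 1).choose (b - 1)) : ℕ) := by
          simp only [Qmat]
          rw [if_pos (show t + 1 ≤ (j : ℕ) ∧ (j : ℕ) ≤ (i : ℕ) by omega),
            show (i : ℕ) - (j : ℕ) = a - b by omega,
            show (i : ℕ) - (t + 1) = a - 1 by omega,
            show (j : ℕ) - (t + 1) = b - 1 by omega]
          push_cast
          ring_nf
        have hL : Qmat n x lam t i j
            = genPow (x + (t : ℝ) * lam) lam (a - b) * ((a.choose b) : ℕ) := by
          simp only [Qmat]
          rw [if_pos ⟨by omega, by omega⟩,
            show (i : ℕ) - (j : ℕ) = a - b by omega]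
        rw [hL, hQj,
          show (i : ℕ) - ((j : ℕ) + 1) = a - b - 1 by omega,
          show ((j : ℕ) + 1) - (t + 1) = b by omega,
          show (i : ℕ) - (t + 1) = a - 1 by omega]
        rw [show a - b = (a - b - 1) + 1 by omega, genPow_succ_left,
          genPow_succ_right]
        simp only [Nat.add_sub_cancel]
        have he : x + (t : ℝ) * lam + lam = x + ((t : ℝ) + 1) * lam := by ring
        rw [he]
        have hkey := key_id (x + (t : ℝ) * lam) lam a b hb1 hab
        have hcast1 : (((a - b - 1 : ℕ)) : ℝ) = (a : ℝ) - b - 1 := by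
          rw [Nat.cast_sub (by omega : 1 ≤ a - b), Nat.cast_sub (by omega : b ≤ a)]
          simp
        have hcast2 : (((j : ℕ)) : ℝ) = (t : ℝ) + b := by
          have hjv : (j : ℕ) = t + b := by omega
          exact_mod_cast hjv
        rw [hcast1, hcast2]
        push_cast
        linear_combination genPow (x + ((t : ℝ) + 1) * lam) lam (a - b - 1) * hkey
    · -- j < t
      rw [dif_neg (by omega)]
      have hL : Qmat n x lam t i j = 0 := by
        simp only [Qmat]; rw [if_neg (by omega), if_neg (by omega)]
      have hR : Qmat n x lam (t + 1) i j = 0 := by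
        simp only [Qmat]; rw [if_neg (by omega), if_neg (by omega)]
      rw [hL, hR, add_zero]
  · -- i = j
    have hij : i = j := Fin.ext hji.symm
    subst hij
    have hterm : (if h : (i : ℕ) + 1 ≤ n ∧ t + 1 ≤ (i : ℕ) + 1 then
        Qmat n x lam (t + 1) i ⟨(i : ℕ) + 1, by omega⟩ *
          (x + (2 * ((t + 1 : ℕ) : ℝ) - ((i : ℕ) + 1 + 1)) * lam) else 0) = 0 := by
      split_ifs with h
      · have hz : Qmat n x lam (t + 1) i ⟨(i : ℕ) + 1, by omega⟩ = 0 := by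
          simp only [Qmat]
          rw [if_neg (show ¬ (t + 1 ≤ (i : ℕ) + 1 ∧ (i : ℕ) + 1 ≤ (i : ℕ)) by omega),
            if_neg (show ¬ ((i : ℕ) = (i : ℕ) + 1) by omega)]
        rw [hz, zero_mul]
      · rfl
    rw [hterm, add_zero]
    have hone : ∀ s : ℕ, Qmat n x lam s i i = 1 := by
      intro s
      simp only [Qmat]
      split_ifs with h
      · simp [Nat.sub_self, genPow_zero]
      · rfl
    rw [hone t, hone (t + 1)]
  · -- i < j
    have hterm : (if h : (j : ℕ) + 1 ≤ n ∧ t + 1 ≤ (j : ℕ) + 1 then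
        Qmat n x lam (t + 1) i ⟨(j : ℕ) + 1, by omega⟩ *
          (x + (2 * ((t + 1 : ℕ) : ℝ) - ((j : ℕ) + 1 + 1)) * lam) else 0) = 0 := by
      split_ifs with h
      · have hz : Qmat n x lam (t + 1) i ⟨(j : ℕ) + 1, by omega⟩ = 0 := by
          simp only [Qmat]
          rw [if_neg (show ¬ (t + 1 ≤ (j : ℕ) + 1 ∧ (j : ℕ) + 1 ≤ (i : ℕ)) by omega),
            if_neg (show ¬ ((i : ℕ) = (j : ℕ) + 1) by omega)]
        rw [hz, zero_mul]
      · rfl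
    rw [hterm, add_zero]
    have hL : Qmat n x lam t i j = 0 := by
      simp only [Qmat]; rw [if_neg (by omega), if_neg (by omega)]
    have hR : Qmat n x lam (t + 1) i j = 0 := by
      simp only [Qmat]; rw [if_neg (by omega), if_neg (by omega)]
    rw [hL, hR]

lemma Qmat_top (n : ℕ) (x lam : ℝ) : Qmat n x lam n = 1 := by
  ext i j
  have hi := i.isLt
  have hj := j.isLt
  rw [Matrix.one_apply]
  simp only [Qmat]
  by_cases hij : i = j
  · subst hij
    rw [if_pos rfl]
    by_cases h : n ≤ (i : ℕ)
    · rw [if_pos ⟨h, le_refl _⟩]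
      simp [genPow_zero]
    · rw [if_neg (by omega), if_pos rfl]
  · have hvne : ¬ ((i : ℕ) = (j : ℕ)) := fun hh => hij (Fin.ext hh)
    rw [if_neg hij]
    by_cases h : n ≤ (j : ℕ) ∧ (j : ℕ) ≤ (i : ℕ)
    · omega
    · rw [if_neg h, if_neg hvne]

lemma prod_eq_Qmat (n : ℕ) (x lam : ℝ) (k : ℕ) (hk : k ≤ n) :
    ((List.range k).map (fun s => Fmat n x lam (n - s))).prod
      = Qmat n x lam (n - k) := by
  induction k with
  | zero => simpa using (Qmat_top n x lam).symm
  | succ k ih =>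
    have hk' : k ≤ n := by omega
    rw [List.range_succ, List.map_append, List.prod_append, ih hk']
    simp only [List.map_cons, List.map_nil, List.prod_cons, List.prod_nil, mul_one]
    rw [show n - k = (n - (k + 1)) + 1 by omega]
    exact (Qmat_step n x lam (n - (k + 1))).symm

/-- If `x ≠ kλ` for every integer `k` with `−(n−1) ≤ k ≤ n−1`, then
`P_{n,λ}[x] = F_n F_{n−1} ⋯ F_1`: the bidiagonal decomposition of
`P_{n,λ}[x]` has all diagonal pivots equal to `1` and multipliers
`m_{ij} = x + (i−2j)λ` for `i > j`. -/
theorem genPascal_bidiagonal_decomposition (n : ℕ) (x lam : ℝ)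
    (hx : ∀ k : ℤ, -((n : ℤ) - 1) ≤ k → k ≤ (n : ℤ) - 1 → x ≠ (k : ℝ) * lam) :
    genPascal n x lam
      = ((List.range n).map (fun s => Fmat n x lam (n - s))).prod := by
  rw [prod_eq_Qmat n x lam n le_rfl, Nat.sub_self]
  ext i j
  simp only [genPascal, Qmat, Nat.zero_le, true_and, Nat.sub_zero, Nat.cast_zero,
    zero_mul, add_zero]
  split_ifs with h1 h2
  · rfl
  · omega
  · rfl
end

section
/- Let n ∈ ℕ, λ ∈ ℝ, and x = −kλ for some k ∈ {0, 1, …, n−1}. For each t = 1, …, k let F_t be the (n+1)×(n+1) lower bidiagonal matrix with ones on the diagonal, subdiagonal entries (F_t)_{r,r−1} = x + (2t−r)λ for r = t+1, …, n+1, (F_t)_{r,r−1} = 0 for r ≤ t, and zeros elsewhere. Then P_{n,λ}[x] = F_k F_{k−1} ⋯ F_1; that is, the bidiagonal decomposition of P_{n,λ}[x] has all diagonal pivots equal to 1, multipliers m_{ij} = x + (i−2j)λ for 0 < i−j ≤ k, and all other multipliers equal to 0. -/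
lemma genPow_succ (x lam : ℝ) (m : ℕ) :
    genPow x lam (m+1) = genPow x lam m * (x + m * lam) :=
  Finset.prod_range_succ _ _

lemma genPow_succ' (x lam : ℝ) (m : ℕ) :
    genPow x lam (m+1) = x * genPow (x + lam) lam m := by
  unfold genPow
  rw [Finset.prod_range_succ']
  simp only [Nat.cast_zero, zero_mul, add_zero]
  rw [mul_comm]
  congr 1
  exact Finset.prod_congr rfl (fun t _ => by push_cast; ring)

lemma choose_key (m A B : ℕ) (hBA : B < A) :
    -((m:ℝ)+1) * ((A+1).choose (B+1)) =
      ((A:ℝ) - B - 1 - m) * (A.choose B) - (((m:ℝ)+1) + ((B:ℝ)+1)) * (A.choose (B+1)) := by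
  have h1 : (((A+1).choose (B+1) : ℕ) : ℝ) = A.choose B + A.choose (B+1) := by
    rw [Nat.choose_succ_succ]; push_cast; ring
  have h2 : ((A.choose (B+1) : ℝ)) * ((B:ℝ)+1) = (A.choose B) * ((A:ℝ) - (B:ℝ)) := by
    have h' : ((A.choose (B+1) * (B+1) : ℕ) : ℝ) = ((A.choose B * (A - B) : ℕ) : ℝ) := by
      exact_mod_cast congrArg (Nat.cast (R := ℝ)) (Nat.choose_succ_right_eq A B)
    rw [Nat.cast_mul, Nat.cast_mul, Nat.cast_sub hBA.le] at h'
    push_cast at h'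
    linarith [h']
  linear_combination (-(m:ℝ)-1) * h1 + h2

noncomputable def Gmat (n k : ℕ) (lam : ℝ) (m : ℕ) :
    Matrix (Fin (n + 1)) (Fin (n + 1)) ℝ :=
  fun i j =>
    if k - m ≤ (j:ℕ) ∧ (j:ℕ) ≤ (i:ℕ) then
      genPow (-((m:ℝ) * lam)) lam ((i:ℕ) - (j:ℕ))
        * (((i:ℕ) - (k-m)).choose ((j:ℕ) - (k-m)))
    else if (i:ℕ) = (j:ℕ) then 1 else 0

lemma Gmat_low {n k m : ℕ} {lam : ℝ} {i j : Fin (n+1)}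
    (h1 : k - m ≤ (j:ℕ)) (h2 : (j:ℕ) ≤ (i:ℕ)) :
    Gmat n k lam m i j
      = genPow (-((m:ℝ) * lam)) lam ((i:ℕ) - (j:ℕ))
          * (((i:ℕ) - (k-m)).choose ((j:ℕ) - (k-m))) :=
  if_pos ⟨h1, h2⟩

lemma Gmat_diag {n k m : ℕ} {lam : ℝ} {i j : Fin (n+1)} (h : (i:ℕ) = (j:ℕ)) :
    Gmat n k lam m i j = 1 := by
  unfold Gmat
  by_cases h1 : k - m ≤ (j:ℕ)
  · rw [if_pos ⟨h1, h.ge⟩, h, Nat.sub_self, genPow_zero, Nat.choose_self]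
    simp
  · rw [if_neg (by tauto), if_pos h]

lemma Gmat_upper {n k m : ℕ} {lam : ℝ} {i j : Fin (n+1)} (h : (i:ℕ) < (j:ℕ)) :
    Gmat n k lam m i j = 0 := by
  unfold Gmat
  rw [if_neg (by omega), if_neg (by omega)]

lemma Gmat_small {n k m : ℕ} {lam : ℝ} {i j : Fin (n+1)}
    (h1 : (j:ℕ) < k - m) (h2 : (j:ℕ) < (i:ℕ)) :
    Gmat n k lam m i j = 0 := by
  unfold Gmat
  rw [if_neg (by omega), if_neg (by omega)]

lemma key_main (lam g : ℝ) (k m d I J : ℕ) (hm : m < k) (hd : d = k - m)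
    (hdJ : d ≤ J) (hJI : J < I) :
    -(((m:ℝ)+1) * lam) * g * (((I-(d-1)).choose (J-(d-1))) : ℕ) =
      g * (-((m:ℝ)*lam) + ((I-(J+1) : ℕ) : ℝ)*lam) * (((I-d).choose (J-d)) : ℕ)
      + g * (((I-d).choose (J+1-d)) : ℕ)
          * (-((k:ℝ)*lam) + (2*((d:ℕ):ℝ) - (((J:ℕ):ℝ)+1+1))*lam) := by
  obtain ⟨B, rfl⟩ : ∃ B, J = d + B := ⟨J - d, by omega⟩
  obtain ⟨A, rfl⟩ : ∃ A, I = d + A := ⟨I - d, by omega⟩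
  have hBA : B < A := by omega
  have e1 : d + A - (d-1) = A + 1 := by omega
  have e2 : d + B - (d-1) = B + 1 := by omega
  have e3 : d + A - d = A := by omega
  have e4 : d + B - d = B := by omega
  have e5 : d + B + 1 - d = B + 1 := by omega
  have e6 : d + A - (d + B + 1) = A - (B + 1) := by omega
  rw [e1, e2, e3, e4, e5, e6, Nat.cast_sub (by omega : B + 1 ≤ A)]
  have hkc : (k:ℝ) = (m:ℝ) + (d:ℝ) := by
    have h : k = m + d := by omega
    rw [h]; push_cast; ring
  rw [hkc]
  have key := choose_key m A B hBA
  push_cast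
  linear_combination g * lam * key

lemma Gmat_zero (n k : ℕ) (lam : ℝ) : Gmat n k lam 0 = 1 := by
  ext i j
  rcases lt_trichotomy ((i:ℕ)) ((j:ℕ)) with h | h | h
  · rw [Gmat_upper h, Matrix.one_apply_ne (fun hc => by simp [hc] at h)]
  · rw [Gmat_diag h, Matrix.one_apply, if_pos (Fin.ext h)]
  · rw [Matrix.one_apply_ne (fun hc => by simp [hc] at h)]
    by_cases hkj : k ≤ (j:ℕ)
    · rw [Gmat_low (by omega) (by omega)]
      obtain ⟨p, hp⟩ : ∃ p, (i:ℕ) - (j:ℕ) = p + 1 := ⟨(i:ℕ) - (j:ℕ) - 1, by omega⟩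
      rw [hp, genPow_succ']
      simp
    · rw [Gmat_small (by omega) h]

lemma Gmat_step (n k : ℕ) (lam : ℝ) (m : ℕ) (hm : m < k) :
    Gmat n k lam m * Fmat n (-((k:ℝ)*lam)) lam (k-m) = Gmat n k lam (m+1) := by
  ext i j
  rw [Matrix.mul_apply]
  have hsplit : ∀ l : Fin (n+1),
      Gmat n k lam m i l * Fmat n (-((k:ℝ)*lam)) lam (k-m) l j
        = (if l = j then Gmat n k lam m i j else 0)
          + (if (l:ℕ) = (j:ℕ)+1 then
              Gmat n k lam m i l *
                (if k - m ≤ (j:ℕ)+1 then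
                  (-((k:ℝ)*lam) + (2*(((k-m):ℕ):ℝ) - (((j:ℕ):ℝ)+1+1))*lam) else 0)
             else 0) := by
    intro l
    unfold Fmat
    rcases eq_or_ne ((l:ℕ)) ((j:ℕ)) with h | h
    · have hlj : l = j := Fin.ext h
      subst hlj
      have h1 : ¬((l:ℕ) = (l:ℕ)+1) := by omega
      simp [h1]
    · rw [if_neg h, if_neg (show l ≠ j from fun hc => h (congrArg _ hc)), zero_add]
      by_cases h2 : (l:ℕ) = (j:ℕ)+1
      · rw [if_pos h2]
        by_cases h3 : k - m ≤ (j:ℕ)+1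
        · rw [if_pos ⟨h2, by omega⟩, if_pos h3]
          have hc : ((l:ℕ):ℝ) = ((j:ℕ):ℝ)+1 := by exact_mod_cast h2
          rw [hc]
        · rw [if_neg (fun hc => h3 (h2 ▸ hc.2)), if_neg h3, mul_zero]
      · rw [if_neg (fun hc => h2 hc.1), if_neg h2, mul_zero]
  rw [Finset.sum_congr rfl (fun l _ => hsplit l), Finset.sum_add_distrib]
  rw [Finset.sum_ite_eq' Finset.univ j (fun _ => Gmat n k lam m i j)]
  rw [if_pos (Finset.mem_univ j)]
  by_cases hjn : (j:ℕ) < n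
  · have hlt : (j:ℕ)+1 < n+1 := by omega
    set j' : Fin (n+1) := ⟨(j:ℕ)+1, hlt⟩ with hj'
    have hsum2 : (∑ l : Fin (n+1), if (l:ℕ) = (j:ℕ)+1 then
              Gmat n k lam m i l *
                (if k - m ≤ (j:ℕ)+1 then
                  (-((k:ℝ)*lam) + (2*(((k-m):ℕ):ℝ) - (((j:ℕ):ℝ)+1+1))*lam) else 0)
             else 0)
        = Gmat n k lam m i j' *
                (if k - m ≤ (j:ℕ)+1 then
                  (-((k:ℝ)*lam) + (2*(((k-m):ℕ):ℝ) - (((j:ℕ):ℝ)+1+1))*lam) else 0) := by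
      exact (Fintype.sum_eq_single j'
        (fun l hl => if_neg (fun hc => hl (Fin.ext hc)))).trans (if_pos rfl)
    rw [hsum2]
    have hj'val : (j' : ℕ) = (j:ℕ)+1 := rfl
    by_cases hIJ : (j:ℕ) < (i:ℕ)
    · by_cases hdJ2 : k - m ≤ (j:ℕ)
      · -- main case
        rw [if_pos (show k - m ≤ (j:ℕ)+1 by omega)]
        rw [Gmat_low (m := m) hdJ2 hIJ.le]
        rw [Gmat_low (m := m) (i := i) (j := j') (by omega) (by rw [hj'val]; omega)]
        rw [Gmat_low (m := m+1) (show k - (m+1) ≤ (j:ℕ) by omega) hIJ.le]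
        rw [hj'val]
        have hab : (i:ℕ) - (j:ℕ) = ((i:ℕ) - ((j:ℕ)+1)) + 1 := by omega
        rw [hab, genPow_succ, genPow_succ']
        have hx1 : -(((m+1:ℕ):ℝ) * lam) + lam = -((m:ℝ)*lam) := by push_cast; ring
        rw [hx1]
        have hkm1 : k - (m+1) = (k-m) - 1 := by omega
        rw [hkm1]
        have key := key_main lam (genPow (-((m:ℝ)*lam)) lam ((i:ℕ)-((j:ℕ)+1)))
          k m (k-m) (i:ℕ) (j:ℕ) hm rfl hdJ2 hIJ
        push_cast at key ⊢
        linear_combination -key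
      · by_cases hdJ : k - m ≤ (j:ℕ)+1
        · -- J = k-m-1 case
          rw [if_pos hdJ]
          rw [Gmat_small (by omega) hIJ]
          rw [Gmat_low (m := m) (i := i) (j := j') (by rw [hj'val]; omega) (by rw [hj'val]; omega)]
          rw [Gmat_low (m := m+1) (show k - (m+1) ≤ (j:ℕ) by omega) hIJ.le]
          rw [hj'val]
          have hc0 : (j:ℕ) - (k-(m+1)) = 0 := by omega
          have hc1 : (j:ℕ)+1-(k-m) = 0 := by omega
          rw [hc0, hc1, Nat.choose_zero_right, Nat.choose_zero_right]
          have hab : (i:ℕ) - (j:ℕ) = ((i:ℕ) - ((j:ℕ)+1)) + 1 := by omega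
          rw [hab, genPow_succ']
          have hx1 : -(((m+1:ℕ):ℝ) * lam) + lam = -((m:ℝ)*lam) := by push_cast; ring
          rw [hx1]
          have hdc : (((k-m):ℕ):ℝ) = (k:ℝ) - (m:ℝ) := Nat.cast_sub hm.le
          have hJc : ((j:ℕ):ℝ) = (k:ℝ) - (m:ℝ) - 1 := by
            have e : (j:ℕ) = k - m - 1 := by omega
            rw [e, Nat.cast_sub (by omega), Nat.cast_sub (by omega)]
            push_cast; ring
          rw [hdc, hJc]
          push_cast
          ring
        · -- J < k-m-1 : everything vanishes
          rw [if_neg hdJ, mul_zero, add_zero]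
          rw [Gmat_small (by omega) hIJ, Gmat_small (m := m+1) (by omega) hIJ]
    · rw [Gmat_upper (i := i) (j := j') (by rw [hj'val]; omega), zero_mul, add_zero]
      rcases eq_or_ne ((i:ℕ)) ((j:ℕ)) with he | he
      · rw [Gmat_diag he, Gmat_diag he]
      · rw [Gmat_upper (by omega), Gmat_upper (m := m+1) (by omega)]
  · have hzero : (∑ l : Fin (n+1), if (l:ℕ) = (j:ℕ)+1 then
              Gmat n k lam m i l *
                (if k - m ≤ (j:ℕ)+1 then
                  (-((k:ℝ)*lam) + (2*(((k-m):ℕ):ℝ) - (((j:ℕ):ℝ)+1+1))*lam) else 0)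
             else 0) = 0 := by
      apply Finset.sum_eq_zero
      intro l _
      exact if_neg (by have := l.isLt; omega)
    rw [hzero, add_zero]
    rcases eq_or_ne ((i:ℕ)) ((j:ℕ)) with he | he
    · rw [Gmat_diag he, Gmat_diag he]
    · have hij : (i:ℕ) < (j:ℕ) := by have := i.isLt; omega
      rw [Gmat_upper hij, Gmat_upper (m := m+1) hij]

/-- If `x = −kλ` for some `k ∈ {0, 1, …, n−1}`, then
`P_{n,λ}[x] = F_k F_{k−1} ⋯ F_1`: the bidiagonal decomposition of
`P_{n,λ}[x]` has all diagonal pivots equal to `1`, multipliers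
`m_{ij} = x + (i−2j)λ` for `0 < i−j ≤ k`, and all other multipliers
equal to `0`. -/
theorem genPascal_bidiagonal_decomposition_of_eq_neg_mul (n : ℕ) (x lam : ℝ)
    (k : ℕ) (hk : k < n) (hx : x = -((k : ℝ) * lam)) :
    genPascal n x lam
      = ((List.range k).map (fun s => Fmat n x lam (k - s))).prod := by
  subst hx
  have main : ∀ m, m ≤ k →
      ((List.range m).map (fun s => Fmat n (-((k:ℝ)*lam)) lam (k - s))).prod
        = Gmat n k lam m := by
    intro m
    induction m with
    | zero => intro _; simp [Gmat_zero]
    | succ m ih =>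
      intro hmk
      rw [List.range_succ, List.map_append, List.prod_append]
      rw [ih (by omega)]
      simp only [List.map_singleton, List.prod_singleton]
      exact Gmat_step n k lam m (by omega)
  rw [main k (le_refl k)]
  ext i j
  unfold Gmat genPascal
  rw [Nat.sub_self, Nat.sub_zero, Nat.sub_zero]
  by_cases h : (j:ℕ) ≤ (i:ℕ)
  · rw [if_pos h, if_pos ⟨Nat.zero_le _, h⟩]
  · rw [if_neg h, if_neg (fun hc => h hc.2), if_neg (by omega)]
end

section
/- Let n ∈ ℕ and α, β, γ ∈ ℝ with α > 0, β > 0, and αβ + γ > 0. Then the lattice path matrix Lp_n(α,β,γ) is strictly totally positive. -/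
/-- The entries of the lattice path matrix `Lp_n(α,β,γ)` in 0-based indexing:
`lpEnt α β γ i j` is the math entry `k_{i+1, j+1}`, determined by
`k_{1j} = α^{j−1}`, `k_{i1} = β^{i−1}` and
`k_{ij} = α k_{i,j−1} + β k_{i−1,j} + γ k_{i−1,j−1}`. -/
noncomputable def lpEnt (α β γ : ℝ) : ℕ → ℕ → ℝ
  | 0, j => α ^ j
  | i + 1, 0 => β ^ (i + 1)
  | i + 1, j + 1 =>
      α * lpEnt α β γ (i + 1) j + β * lpEnt α β γ i (j + 1) + γ * lpEnt α β γ i j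

/-- The `(n+1)×(n+1)` lattice path matrix `Lp_n(α,β,γ)`. -/
noncomputable def latticePath (n : ℕ) (α β γ : ℝ) :
    Matrix (Fin (n + 1)) (Fin (n + 1)) ℝ :=
  fun i j => lpEnt α β γ (i : ℕ) (j : ℕ)

/-- A square real matrix is strictly totally positive if every minor (the
determinant of any square submatrix obtained by selecting rows and columns
along strictly increasing index sequences) is positive. -/
def IsStrictlyTotallyPositive {m : ℕ} (A : Matrix (Fin m) (Fin m) ℝ) : Prop :=
  ∀ (k : ℕ) (r c : Fin k → Fin m), StrictMono r → StrictMono c →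
    0 < (A.submatrix r c).det

/-!
With `q = (αβ + γ) / (αβ)` the recursion is solved (0-based) by
`k i j = β ^ i * α ^ j * ∑ m, choose i m * q ^ m * choose j m`,
that is `Lp_n = D_β (P D_q Pᵀ) D_α` with `P` the Pascal matrix and `D_β, D_q, D_α` positive
diagonal. By Cauchy–Binet the minor of `P D_q Pᵀ` on rows `R` and columns `C` is
`∑_T q ^ (∑ T) * det P[R,T] * det P[C,T]`. Every minor of `P` is nonnegative: Pascal's rule
factors `P` through a bidiagonal 0/1 matrix, which lets one induct on the row indices. For
`T = {0, …, k-1}` the minors of `P` are positive, being Vandermonde determinants divided by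
factorials.
-/

open Finset Matrix

section CauchyBinet

variable {R ι : Type*} [CommRing R] {k : ℕ}

theorem Matrix.det_mul_eq_sum_prod_mul_det_submatrix [Fintype ι] (A : Matrix (Fin k) ι R)
    (B : Matrix ι (Fin k) R) :
    (A * B).det = ∑ p : Fin k → ι, (∏ i, B (p i) i) * (A.submatrix id p).det := by
  simp only [det_apply', mul_apply, prod_univ_sum, mul_sum, Fintype.piFinset_univ,
    submatrix_apply, id]
  rw [sum_comm]
  refine sum_congr rfl fun p _ => sum_congr rfl fun σ _ => ?_
  rw [prod_mul_distrib]
  ring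

variable [LinearOrder ι]

theorem StrictMono.comp_perm_comp_sort {s : Fin k → ι} (hs : StrictMono s)
    (σ : Equiv.Perm (Fin k)) : (s ∘ σ) ∘ Tuple.sort (s ∘ σ) = s := by
  rw [Tuple.comp_perm_comp_sort_eq_comp_sort, Tuple.sort_eq_refl_iff_monotone.2 hs.monotone]
  rfl

theorem StrictMono.sort_comp_perm {s : Fin k → ι} (hs : StrictMono s) (σ : Equiv.Perm (Fin k)) :
    Tuple.sort (s ∘ σ) = σ⁻¹ := by
  ext x : 1
  exact Equiv.Perm.eq_inv_iff_eq.2 (hs.injective (congrFun (hs.comp_perm_comp_sort σ) x))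

variable [Fintype ι]

open Classical in
theorem Finset.sum_injective_eq_sum_strictMono_sum_perm {M : Type*} [AddCommMonoid M]
    (f : (Fin k → ι) → M) :
    ∑ p with Function.Injective p, f p =
      ∑ s with StrictMono s, ∑ σ : Equiv.Perm (Fin k), f (s ∘ σ) := by
  rw [← sum_product']
  refine sum_nbij' (fun p => (p ∘ Tuple.sort p, (Tuple.sort p)⁻¹)) (fun x => x.1 ∘ x.2)
    ?_ ?_ ?_ ?_ ?_
  · intro p hp
    simp only [mem_filter_univ] at hp
    simpa using (Tuple.monotone_sort p).strictMono_of_injective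
      (hp.comp (Tuple.sort p).injective)
  · intro x hx
    simp only [mem_product, mem_filter_univ, mem_univ, and_true] at hx
    simpa using hx.injective.comp x.2.injective
  · intro p _
    ext x
    simp
  · intro x hx
    simp only [mem_product, mem_filter_univ, mem_univ, and_true] at hx
    simp [hx.sort_comp_perm, Function.comp_assoc]
  · intro p _
    simp [Function.comp_assoc]

open Classical in
theorem Matrix.det_mul_eq_sum_det_submatrix_mul_det_submatrix (A : Matrix (Fin k) ι R)
    (B : Matrix ι (Fin k) R) :
    (A * B).det = ∑ s with StrictMono s, (A.submatrix id s).det * (B.submatrix s id).det := by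
  have h_noninj : ∀ p : Fin k → ι, ¬ Function.Injective p → (A.submatrix id p).det = 0 := by
    intro p hp
    obtain ⟨i, j, hij, hne⟩ := Function.not_injective_iff.1 hp
    exact det_zero_of_column_eq hne fun x => by simp [hij]
  rw [det_mul_eq_sum_prod_mul_det_submatrix,
    ← sum_filter_of_ne (p := Function.Injective) fun p _ h => ?_,
    sum_injective_eq_sum_strictMono_sum_perm]
  · refine sum_congr rfl fun s _ => ?_
    rw [det_apply' (B.submatrix s id), mul_sum]
    refine sum_congr rfl fun σ _ => ?_
    rw [show A.submatrix id (s ∘ σ) = (A.submatrix id s).submatrix id σ from rfl, det_permute']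
    simp only [submatrix_apply, id, Function.comp_apply]
    ring
  · exact not_not.1 fun hp => h (by rw [h_noninj p hp, mul_zero])

end CauchyBinet

section PascalMinors

variable {R : Type*} [CommRing R] [LinearOrder R] [IsStrictOrderedRing R]

theorem det_bidiagonal_nonneg :
    ∀ {k : ℕ} {u s : Fin k → ℕ}, StrictMono u → StrictMono s →
    0 ≤ (of fun i j => if s j = u i ∨ s j = u i + 1 then (1 : R) else 0).det
  | 0, _, _, _, _ => by simp
  | k + 1, u, s, hu, hs => by
    set M : Matrix (Fin (k + 1)) (Fin (k + 1)) R :=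
      of fun i j => if s j = u i ∨ s j = u i + 1 then 1 else 0
    -- a nonzero entry above the corner forces a zero row in the complementary minor
    have h_off : ∀ i ≠ Fin.last k,
        M i (Fin.last k) * (M.submatrix i.succAbove (Fin.last k).succAbove).det = 0 := by
      intro i hi
      obtain ⟨i, rfl⟩ := Fin.exists_castSucc_eq.2 hi
      by_cases h_entry : M i.castSucc (Fin.last k) = 0
      · rw [h_entry, zero_mul]
      have h_le : s (Fin.last k) ≤ u i.castSucc + 1 := by
        by_contra! h
        exact h_entry (if_neg (by omega))
      refine mul_eq_zero_of_right _ (det_eq_zero_of_row_eq_zero i fun j => if_neg ?_)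
      have := hu (Fin.castSucc_lt_succ (i := i))
      have := hs (Fin.castSucc_lt_last j)
      simp only [Fin.succAbove_castSucc_self, Fin.succAbove_last]
      omega
    rw [det_succ_column M (Fin.last k), sum_eq_single (Fin.last k)
      (fun i _ hi => by rw [mul_assoc, h_off i hi, mul_zero]) (by simp)]
    have h_minor := det_bidiagonal_nonneg (hu.comp Fin.strictMono_castSucc)
      (hs.comp Fin.strictMono_castSucc)
    simp only [← two_mul, pow_mul, neg_one_sq, one_pow, one_mul, Fin.succAbove_last]
    exact mul_nonneg (by simp only [M, of_apply]; split_ifs <;> norm_num) h_minor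

theorem choose_succ_eq_sum_choose_mul_bidiagonal (r : ℕ) {s N : ℕ} (hs : s ≤ N) :
    ((r + 1).choose s : R) =
      ∑ t : Fin (N + 1), (r.choose t : R) * if s = t ∨ s = t + 1 then 1 else 0 := by
  rw [Fin.sum_univ_eq_sum_range (fun t => (r.choose t : R) * if s = t ∨ s = t + 1 then 1 else 0)]
  rcases s with _ | s
  · rw [sum_eq_single 0 (fun t _ ht => by simp [Ne.symm ht]) (by simp)]
    simp
  · rw [sum_eq_add s (s + 1) (by omega) (fun t _ ht => by simp; omega) (by simp; omega)
      (by simp; omega)]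
    simp [Nat.choose_succ_succ', add_comm]

theorem det_choose_succ_eq_sum {k N : ℕ} (r s : Fin k → ℕ) (hs : ∀ j, s j ≤ N) :
    (of fun i j => ((r i + 1).choose (s j) : R)).det =
      ∑ t : Fin k → Fin (N + 1) with StrictMono t,
        (of fun i j => ((r i).choose (t j) : R)).det *
          (of fun i j => if s j = t i ∨ s j = t i + 1 then (1 : R) else 0).det := by
  have h_factor : (of fun i j => ((r i + 1).choose (s j) : R)) =
      (of fun i (t : Fin (N + 1)) => ((r i).choose t : R)) *
        of fun (t : Fin (N + 1)) j => if s j = t ∨ s j = t + 1 then (1 : R) else 0 := by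
    ext i j
    exact choose_succ_eq_sum_choose_mul_bidiagonal (r i) (hs j)
  rw [h_factor, det_mul_eq_sum_det_submatrix_mul_det_submatrix]
  rfl

theorem det_choose_of_head_eq_zero {k : ℕ} {r s : Fin (k + 1) → ℕ} (hs : StrictMono s)
    (hr0 : r 0 = 0) (hs0 : s 0 = 0) :
    (of fun i j => ((r i).choose (s j) : R)).det =
      (of fun i j : Fin k => ((r i.succ).choose (s j.succ) : R)).det := by
  have h_row : ∀ j ≠ 0, ((r 0).choose (s j) : R) = 0 := fun j hj => by
    rw [hr0, Nat.choose_eq_zero_of_lt (hs0 ▸ hs (Fin.pos_iff_ne_zero.2 hj)), Nat.cast_zero]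
  rw [det_succ_row_zero, sum_eq_single 0 (fun j _ hj => by simp [h_row j hj]) (by simp)]
  simp [hr0, hs0]
  rfl

theorem det_choose_nonneg : ∀ {k : ℕ} {r s : Fin k → ℕ}, StrictMono r → StrictMono s →
    0 ≤ (of fun i j => ((r i).choose (s j) : R)).det
  | 0, _, _, _, _ => by simp
  | k + 1, r, s, hr, hs => by
    rcases Nat.eq_zero_or_pos (r 0) with hr0 | hr0
    · rcases Nat.eq_zero_or_pos (s 0) with hs0 | hs0
      · rw [det_choose_of_head_eq_zero hs hr0 hs0]
        exact det_choose_nonneg (hr.comp Fin.strictMono_succ) (hs.comp Fin.strictMono_succ)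
      · refine (det_eq_zero_of_row_eq_zero 0 fun j => ?_).ge
        have : 0 < s j := hs0.trans_le (hs.monotone (Fin.zero_le j))
        simp [hr0, Nat.choose_eq_zero_of_lt this]
    · have hr1 : ∀ i, r i = (r i - 1) + 1 := fun i => by
        have := hr.monotone (Fin.zero_le i); omega
      have hr' : StrictMono fun i => r i - 1 := fun i j hij => by
        have := hr hij; have := hr1 i; show r i - 1 < r j - 1; omega
      have h_sum : ∑ i, (r i - 1 + 1) < ∑ i, (r i + 1) :=
        sum_lt_sum (fun i _ => by omega) ⟨0, mem_univ _, by omega⟩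
      rw [show r = fun i => r i - 1 + 1 from funext hr1,
        det_choose_succ_eq_sum _ s (N := s (Fin.last k)) (fun j => hs.monotone (Fin.le_last j))]
      refine sum_nonneg fun t ht => ?_
      have ht' : StrictMono fun i => (t i : ℕ) :=
        Fin.val_strictMono.comp ((mem_filter_univ _).1 ht)
      exact mul_nonneg (det_choose_nonneg hr' ht') (det_bidiagonal_nonneg ht' hs)
termination_by k r => ∑ i, (r i + 1)
decreasing_by
  all_goals first | exact h_sum | simp [Fin.sum_univ_succ]

theorem det_choose_initial_pos {k : ℕ} {r : Fin k → ℕ} (hr : StrictMono r) :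
    0 < (of fun i j : Fin k => ((r i).choose j : R)).det := by
  have h_vdm := det_eval_matrixOfPolynomials_eq_det_vandermonde (fun i => (r i : R))
    (fun j => descPochhammer R j) (fun j => descPochhammer_natDegree R j)
    (fun j => monic_descPochhammer R j)
  have h_eval : (of fun i j : Fin k => (descPochhammer R j).eval (r i : R)).det =
      (∏ j : Fin k, ((j : ℕ).factorial : R)) *
        (of fun i j : Fin k => ((r i).choose j : R)).det := by
    rw [← det_mul_row]
    congr 1
    ext i j
    simp [descPochhammer_eval_eq_descFactorial, Nat.descFactorial_eq_factorial_mul_choose]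
  rw [h_eval] at h_vdm
  have h_pos : 0 < (vandermonde fun i => (r i : R)).det := by
    rw [det_vandermonde]
    exact prod_pos fun i _ => prod_pos fun j hj => sub_pos.2 (by exact_mod_cast hr (mem_Ioi.1 hj))
  exact pos_of_mul_pos_right (h_vdm ▸ h_pos) (prod_nonneg fun j _ => by positivity)

end PascalMinors

noncomputable def pascalGram (q : ℝ) (N i j : ℕ) : ℝ :=
  ∑ m ∈ range N, (i.choose m : ℝ) * q ^ m * j.choose m

theorem pascalGram_zero_left (q : ℝ) {N : ℕ} (hN : 0 < N) (j : ℕ) :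
    pascalGram q N 0 j = 1 := by
  obtain ⟨N, rfl⟩ := Nat.exists_eq_add_one_of_ne_zero hN.ne'
  simp [pascalGram, sum_range_succ']

theorem pascalGram_zero_right (q : ℝ) {N : ℕ} (hN : 0 < N) (i : ℕ) :
    pascalGram q N i 0 = 1 := by
  obtain ⟨N, rfl⟩ := Nat.exists_eq_add_one_of_ne_zero hN.ne'
  simp [pascalGram, sum_range_succ']

theorem pascalGram_succ_of_lt (q : ℝ) {N i : ℕ} (h : i < N) (j : ℕ) :
    pascalGram q (N + 1) i j = pascalGram q N i j := by
  simp [pascalGram, sum_range_succ, Nat.choose_eq_zero_of_lt h]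

theorem pascalGram_succ_succ (q : ℝ) (N i j : ℕ) :
    pascalGram q (N + 1) (i + 1) (j + 1) - pascalGram q (N + 1) (i + 1) j -
      pascalGram q (N + 1) i (j + 1) + pascalGram q (N + 1) i j = q * pascalGram q N i j := by
  have h_diff : ∀ m, ((i + 1).choose m : ℝ) * q ^ m * (j + 1).choose m -
      (i + 1).choose m * q ^ m * j.choose m - i.choose m * q ^ m * (j + 1).choose m +
      i.choose m * q ^ m * j.choose m =
      ((i + 1).choose m - i.choose m) * ((j + 1).choose m - j.choose m) * q ^ m := fun m => by
    ring
  simp only [pascalGram]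
  rw [← sum_sub_distrib, ← sum_sub_distrib, ← sum_add_distrib]
  simp only [h_diff]
  rw [sum_range_succ']
  simp only [Nat.choose_succ_succ', Nat.cast_add, add_sub_cancel_right, Nat.choose_zero_right,
    sub_self, mul_zero, zero_mul, add_zero, mul_sum]
  exact sum_congr rfl fun m _ => by ring

theorem lpEnt_eq_pascalGram {α β : ℝ} (γ : ℝ) (hα : α ≠ 0) (hβ : β ≠ 0) {N : ℕ} :
    ∀ i j : ℕ, i < N →
      lpEnt α β γ i j = β ^ i * pascalGram ((α * β + γ) / (α * β)) N i j * α ^ j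
  | 0, j, hN => by simp [lpEnt, pascalGram_zero_left _ hN]
  | i + 1, 0, hN => by simp [lpEnt, pascalGram_zero_right _ (by omega : 0 < N)]
  | i + 1, j + 1, hN => by
    obtain ⟨N, rfl⟩ : ∃ N', N = N' + 1 := ⟨N - 1, by omega⟩
    rw [lpEnt, lpEnt_eq_pascalGram γ hα hβ (i + 1) j hN,
      lpEnt_eq_pascalGram γ hα hβ (N := N + 1) i (j + 1) (by omega),
      lpEnt_eq_pascalGram γ hα hβ (N := N + 1) i j (by omega)]
    set q := (α * β + γ) / (α * β) with hq
    have hγ : γ = α * β * (q - 1) := by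
      rw [hq]
      field_simp
      ring
    linear_combination (β ^ i * α ^ j * pascalGram q N i j) * hγ +
      (β ^ (i + 1) * α ^ (j + 1) + γ * β ^ i * α ^ j) *
        pascalGram_succ_of_lt q (by omega : i < N) j -
      (β ^ (i + 1) * α ^ (j + 1)) * pascalGram_succ_succ q N i j

theorem IsStrictlyTotallyPositive.diagonal_scale {m : ℕ} {A : Matrix (Fin m) (Fin m) ℝ}
    (hA : IsStrictlyTotallyPositive A) {a b : Fin m → ℝ} (ha : ∀ i, 0 < a i)
    (hb : ∀ j, 0 < b j) : IsStrictlyTotallyPositive (of fun i j => a i * A i j * b j) := by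
  intro k r c hr hc
  have h_scale : (of fun i j => a i * A i j * b j).submatrix r c =
      of fun i j => a (r i) * (of fun i j => b (c j) * A.submatrix r c i j) i j := by
    ext i j
    simp only [submatrix_apply, of_apply]
    ring
  rw [h_scale, det_mul_column, det_mul_row]
  exact mul_pos (prod_pos fun i _ => ha _) (mul_pos (prod_pos fun j _ => hb _) (hA k r c hr hc))

theorem isStrictlyTotallyPositive_pascalGram {N : ℕ} {q : ℝ} (hq : 0 < q) :
    IsStrictlyTotallyPositive (of fun i j : Fin N => pascalGram q N i j) := by
  intro k r c hr hc
  have h_factor : (of fun i j : Fin N => pascalGram q N i j).submatrix r c =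
      (of fun i (m : Fin N) => ((r i : ℕ).choose m : ℝ)) *
        of fun (m : Fin N) j => q ^ (m : ℕ) * (c j : ℕ).choose m := by
    ext i j
    simp only [submatrix_apply, of_apply, pascalGram, mul_apply, mul_assoc]
    exact (Fin.sum_univ_eq_sum_range
      (fun m => ((r i : ℕ).choose m : ℝ) * (q ^ m * (c j : ℕ).choose m)) N).symm
  have h_right : ∀ t : Fin k → Fin N,
      ((of fun (m : Fin N) j => q ^ (m : ℕ) * ((c j : ℕ).choose m : ℝ)).submatrix t id).det =
        (∏ i, q ^ (t i : ℕ)) * (of fun i j => ((c i : ℕ).choose (t j) : ℝ)).det := by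
    intro t
    rw [← det_transpose (of fun i j => ((c i : ℕ).choose (t j) : ℝ)), ← det_mul_column]
    rfl
  have hr' : StrictMono fun i => (r i : ℕ) := Fin.val_strictMono.comp hr
  have hc' : StrictMono fun i => (c i : ℕ) := Fin.val_strictMono.comp hc
  have hkN : k ≤ N := by simpa using Fintype.card_le_of_injective r hr.injective
  rw [h_factor, det_mul_eq_sum_det_submatrix_mul_det_submatrix]
  refine sum_pos' (fun t ht => ?_)
    ⟨Fin.castLE hkN, (mem_filter_univ _).2 (Fin.strictMono_castLE hkN), ?_⟩
  · have ht' : StrictMono fun i => (t i : ℕ) :=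
      Fin.val_strictMono.comp ((mem_filter_univ _).1 ht)
    rw [h_right]
    exact mul_nonneg (det_choose_nonneg hr' ht')
      (mul_nonneg (prod_nonneg fun i _ => by positivity) (det_choose_nonneg hc' ht'))
  · rw [h_right]
    exact mul_pos (det_choose_initial_pos hr')
      (mul_pos (prod_pos fun i _ => by positivity) (det_choose_initial_pos hc'))

/-- If `α > 0`, `β > 0` and `αβ + γ > 0`, then the lattice path matrix
`Lp_n(α,β,γ)` is strictly totally positive. -/
theorem latticePath_strictlyTotallyPositive (n : ℕ) (α β γ : ℝ)
    (hα : 0 < α) (hβ : 0 < β) (h : 0 < α * β + γ) :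
    IsStrictlyTotallyPositive (latticePath n α β γ) := by
  have h_entries : latticePath n α β γ = of fun i j : Fin (n + 1) => β ^ (i : ℕ) *
      (of fun i j : Fin (n + 1) => pascalGram ((α * β + γ) / (α * β)) (n + 1) i j) i j *
        α ^ (j : ℕ) := by
    ext i j
    exact lpEnt_eq_pascalGram γ hα.ne' hβ.ne' i j i.isLt
  rw [h_entries]
  exact (isStrictlyTotallyPositive_pascalGram (by positivity)).diagonal_scale
    (fun i => by positivity) (fun j => by positivity)
end

section
/- Let n ∈ ℕ and x, y ∈ ℝ. Then the lattice path matrix with parameters α = 0, β = xy, γ = y² equals the extended generalized Pascal matrix Φ_n[x,y]; that is, Lp_n(0, xy, y²)_{ij} = x^{i−j} y^{i+j−2} · binom(i−1, j−1) for 1 ≤ j ≤ i ≤ n+1 and Lp_n(0, xy, y²)_{ij} = 0 for j > i. -/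


lemma lpEnt_eq (x y : ℝ) : ∀ i j : ℕ,
    lpEnt 0 (x * y) (y ^ 2) i j =
      if j ≤ i then x ^ (i - j) * y ^ (i + j) * (i.choose j) else 0 := by
  intro i
  induction i with
  | zero =>
    intro j
    cases j with
    | zero => simp [lpEnt]
    | succ j => simp [lpEnt]
  | succ i ih =>
    intro j
    cases j with
    | zero => simp [lpEnt]; ring
    | succ j =>
      rw [lpEnt, ih, ih]
      rcases lt_trichotomy (j+1) (i+1) with h | h | h
      · have h1 : j + 1 ≤ i := Nat.lt_succ_iff.mp h
        have h2 : j ≤ i := le_trans (Nat.le_succ j) h1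
        rw [if_pos h1, if_pos h2, if_pos (le_trans h1 (Nat.le_succ i))]
        have e1 : i - j = (i - (j+1)) + 1 := by omega
        have e2 : i + 1 - (j + 1) = (i - (j+1)) + 1 := by omega
        rw [Nat.choose_succ_succ, e1, e2, Nat.cast_add]
        ring_nf
        rw [Nat.add_comm 1 j]
        ring
      · have hj : j = i := by omega
        subst hj
        rw [if_neg (by omega), if_pos (le_refl _), if_pos (by omega)]
        simp
        ring_nf
      · rw [if_neg (by omega), if_neg (by omega), if_neg (by omega)]
        ring

/-- `Lp_n(0, xy, y²) = Φ_n[x,y]`: its `(i,j)` entry equals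
`x^{i−j}·y^{i+j−2}·binom(i−1, j−1)` for `1 ≤ j ≤ i ≤ n+1` and `0` for
`j > i` (stated here in 0-based indexing). -/
theorem latticePath_zero_xy_ysq (n : ℕ) (x y : ℝ) :
    ∀ i j : Fin (n + 1),
      latticePath n 0 (x * y) (y ^ 2) i j =
        if (j : ℕ) ≤ (i : ℕ) then
          x ^ ((i : ℕ) - (j : ℕ)) * y ^ ((i : ℕ) + (j : ℕ)) *
            ((i : ℕ).choose (j : ℕ))
        else 0 := by
  intro i j
  exact lpEnt_eq x y i j
end

section
/- Let n ∈ ℕ and x, y ∈ ℝ with x ≠ 0. Then the lattice path matrix with parameters α = y/x, β = xy, γ = 0 equals the extended generalized symmetric Pascal matrix Ψ_n[x,y]; that is, Lp_n(y/x, xy, 0)_{ij} = x^{i−j} y^{i+j−2} · binom(i+j−2, j−1) for all 1 ≤ i, j ≤ n+1. -/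
lemma zpow_sub_nat (x : ℝ) (hx : x ≠ 0) (i j : ℕ) :
    x ^ ((i : ℤ) - (j : ℤ)) = x ^ i / x ^ j := by
  rw [zpow_sub₀ hx, zpow_natCast, zpow_natCast]

lemma lpEnt_aux (x y : ℝ) (hx : x ≠ 0) :
    ∀ i j : ℕ, lpEnt (y / x) (x * y) 0 i j =
      x ^ ((i : ℤ) - (j : ℤ)) * y ^ (i + j) * ((i + j).choose j) := by
  intro i
  induction i with
  | zero =>
      intro j
      simp [lpEnt, zpow_sub_nat x hx, div_pow]
      ring
  | succ i ih =>
      intro j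
      induction j with
      | zero =>
          rw [lpEnt, zpow_sub_nat x hx]
          simp [mul_pow]
      | succ j ihj =>
          have hc : ((i + 1 + (j + 1)).choose (j + 1) : ℝ) =
              ((i + 1 + j).choose j : ℝ) + ((i + (j + 1)).choose (j + 1) : ℝ) := by
            have h : (i + 1 + (j + 1)).choose (j + 1) =
                (i + 1 + j).choose j + (i + (j + 1)).choose (j + 1) := by
              rw [show i + 1 + (j + 1) = (i + 1 + j) + 1 by omega, Nat.choose_succ_succ,
                show i + 1 + j = i + (j + 1) from by omega]
            rw [h]; push_cast; ring
          have hxj : (x : ℝ) ^ j ≠ 0 := pow_ne_zero _ hx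
          rw [lpEnt, ih, ihj, hc, zpow_sub_nat x hx, zpow_sub_nat x hx,
            zpow_sub_nat x hx]
          field_simp
          ring

/-- For `x ≠ 0`, `Lp_n(y/x, xy, 0) = Ψ_n[x,y]`: its `(i,j)` entry equals
`x^{i−j}·y^{i+j−2}·binom(i+j−2, j−1)` for all `1 ≤ i, j ≤ n+1` (stated here
in 0-based indexing; `x^{i−j}` is an integer power of the nonzero real `x`). -/
theorem latticePath_ydivx_xy_zero (n : ℕ) (x y : ℝ) (hx : x ≠ 0) :
    ∀ i j : Fin (n + 1),
      latticePath n (y / x) (x * y) 0 i j =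
        x ^ ((i : ℤ) - (j : ℤ)) * y ^ ((i : ℕ) + (j : ℕ)) *
          (((i : ℕ) + (j : ℕ)).choose (j : ℕ)) := by
  intro i j
  exact lpEnt_aux x y hx i j
end

section
/- Let n ∈ ℕ and x, y ∈ ℝ with x > 0 and y > 0. Then the generalized symmetric Pascal matrix R_n[x,y], the (n+1)×(n+1) real matrix with entries (R_n[x,y])_{ij} = x^{j−1} y^{i−1} · binom(i+j−2, j−1), is strictly totally positive. -/
/-- The generalized symmetric Pascal matrix `R_n[x,y]`, the `(n+1)×(n+1)`
real matrix with entries `(R_n[x,y])_{ij} = x^{j−1}·y^{i−1}·binom(i+j−2, j−1)`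
(0-based indexing). -/
noncomputable def genSymPascal (n : ℕ) (x y : ℝ) :
    Matrix (Fin (n + 1)) (Fin (n + 1)) ℝ :=
  fun i j =>
    x ^ (j : ℕ) * y ^ (i : ℕ) * (((i : ℕ) + (j : ℕ)).choose (j : ℕ))

/-!
After factoring out the powers of `x` and `y`, a minor of `R_n[x,y]` becomes
`det (C(r i + c j, c j))` for strictly increasing `r` and `c`. By the hockey-stick identity
`C(r + c + 1, c + 1) = ∑_{t ≤ r} C(t + c, c)`, subtracting from each row the previous one turns
row `i` into the sum of the rows `t ∈ (r (i-1), r i]` of the same matrix with every `c j`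
lowered by one. These intervals are disjoint and increasing, so by multilinearity the
determinant is a sum of minors with strictly increasing row indices, positive by induction.
If `c 0 = 0` the first column is constant, and after differencing it is eliminated by
expanding along it.
-/

open Finset Matrix

def binomRow {ι : Type*} (c : ι → ℕ) (t : ℕ) : ι → ℝ :=
  fun j => ((t + c j).choose (c j) : ℝ)

def binomMatrix {ι : Type*} (r c : ι → ℕ) : Matrix ι ι ℝ :=
  of fun i => binomRow c (r i)

lemma sum_range_binomRow {ι : Type*} (c : ι → ℕ) (b : ℕ) :
    ∑ t ∈ range (b + 1), binomRow c t = binomRow (c + 1) b := by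
  ext j
  simp only [Finset.sum_apply, binomRow, Pi.add_apply, Pi.one_apply, ← add_assoc]
  exact_mod_cast Nat.sum_range_add_choose b (c j)

lemma sum_Ioc_binomRow {ι : Type*} (c : ι → ℕ) {a b : ℕ} (h : a ≤ b) :
    ∑ t ∈ Ioc a b, binomRow c t = binomRow (c + 1) b - binomRow (c + 1) a := by
  rw [← Finset.Ico_add_one_add_one_eq_Ioc, Finset.sum_Ico_eq_sub _ (by omega),
    sum_range_binomRow, sum_range_binomRow]

lemma binomRow_cons_zero {k : ℕ} (c : Fin k → ℕ) (t : ℕ) :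
    binomRow (Fin.cons 0 (c + 1) : Fin (k + 1) → ℕ) t = Fin.cons 1 (binomRow (c + 1) t) := by
  ext j
  cases j using Fin.cases <;> simp [binomRow]

lemma det_sum_rows {ι α R : Type*} [Fintype ι] [DecidableEq ι] [CommRing R]
    (S : ι → Finset α) (v : α → ι → R) :
    det (of fun i => ∑ t ∈ S i, v t) =
      ∑ f ∈ Fintype.piFinset S, det (of fun i => v (f i)) :=
  detRowAlternating.map_sum_finset (fun _ t => v t) S

lemma det_pos_of_sum_rows {ι α R : Type*} [Fintype ι] [DecidableEq ι] [LinearOrder ι]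
    [Preorder α] [CommRing R] [PartialOrder R] [IsOrderedCancelAddMonoid R]
    (S : ι → Finset α) (v : α → ι → R) (hne : ∀ i, (S i).Nonempty)
    (hlt : ∀ i j, i < j → ∀ s ∈ S i, ∀ t ∈ S j, s < t)
    (hv : ∀ f : ι → α, StrictMono f → 0 < det (of fun i => v (f i))) :
    0 < det (of fun i => ∑ t ∈ S i, v t) := by
  rw [det_sum_rows]
  refine sum_pos (fun f hf => hv f fun i j hij => ?_) (Fintype.piFinset_nonempty.2 hne)
  rw [Fintype.mem_piFinset] at hf
  exact hlt i j hij _ (hf i) _ (hf j)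

/-- The interval `(r (i - 1), r i]`, where `r (-1)` is read as `-1`. -/
def gapInterval {k : ℕ} (r : Fin (k + 1) → ℕ) : Fin (k + 1) → Finset ℕ :=
  Fin.cons (range (r 0 + 1)) fun i => Ioc (r i.castSucc) (r i.succ)

section gapInterval

variable {k : ℕ} {r : Fin (k + 1) → ℕ}

lemma gapInterval_subset_Iic (i : Fin (k + 1)) : gapInterval r i ⊆ Iic (r i) := by
  cases i using Fin.cases with
  | zero => intro t; simp [gapInterval]
  | succ i => exact fun t ht => mem_Iic.2 (mem_Ioc.1 ht).2

lemma gapInterval_nonempty (hr : StrictMono r) (i : Fin (k + 1)) : (gapInterval r i).Nonempty := by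
  cases i using Fin.cases with
  | zero => exact nonempty_range_add_one
  | succ i => exact nonempty_Ioc.2 (hr Fin.castSucc_lt_succ)

lemma lt_of_mem_gapInterval (hr : StrictMono r) {i j : Fin (k + 1)} (hij : i < j) :
    ∀ s ∈ gapInterval r i, ∀ t ∈ gapInterval r j, s < t := by
  intro s hs t ht
  cases j using Fin.cases with
  | zero => exact absurd hij (Fin.not_lt_zero i)
  | succ j =>
    calc s ≤ r i := mem_Iic.1 (gapInterval_subset_Iic i hs)
      _ ≤ r j.castSucc := hr.monotone (Fin.le_castSucc_iff.2 hij)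
      _ < t := (mem_Ioc.1 ht).1

end gapInterval

lemma det_binomMatrix_add_one {k : ℕ} {r : Fin (k + 1) → ℕ} (hr : Monotone r)
    (c : Fin (k + 1) → ℕ) :
    det (binomMatrix r (c + 1)) = det (of fun i => ∑ t ∈ gapInterval r i, binomRow c t) := by
  refine det_eq_of_forall_row_eq_smul_add_pred (fun _ => 1) (fun j => ?_) (fun i j => ?_)
  · exact congrFun (sum_range_binomRow c (r 0)).symm j
  · have := congrFun (sum_Ioc_binomRow c (hr (Fin.castSucc_lt_succ (i := i)).le)) j
    simp only [Pi.sub_apply] at this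
    simp only [binomMatrix, gapInterval, of_apply, Fin.cons_succ, this]
    ring

lemma det_binomMatrix_cons_zero {k : ℕ} {r : Fin (k + 1) → ℕ} (hr : Monotone r)
    (c : Fin k → ℕ) :
    det (binomMatrix r (Fin.cons 0 (c + 1))) =
      det (of fun i => ∑ t ∈ gapInterval r i.succ, binomRow c t) := by
  let B : Matrix (Fin (k + 1)) (Fin (k + 1)) ℝ :=
    of (Fin.cons (binomMatrix r (Fin.cons 0 (c + 1)) 0)
      fun i => Fin.cons 0 (∑ t ∈ gapInterval r i.succ, binomRow c t))
  have hB : det (binomMatrix r (Fin.cons 0 (c + 1))) = det B := by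
    refine det_eq_of_forall_row_eq_smul_add_pred (fun _ => 1) (fun j => ?_) (fun i j => ?_)
    · simp [B]
    · cases j using Fin.cases <;>
        simp [B, binomMatrix, binomRow_cons_zero, gapInterval,
          sum_Ioc_binomRow c (hr Fin.castSucc_lt_succ.le)]
  rw [hB, det_succ_column_zero, Fin.sum_univ_succ]
  simp [B, binomMatrix, binomRow_cons_zero, submatrix, -Finset.sum_apply]

lemma StrictMono.exists_eq_add_one {ι : Type*} [Preorder ι] {c : ι → ℕ} (hc : StrictMono c)
    (hpos : ∀ j, 0 < c j) : ∃ c' : ι → ℕ, StrictMono c' ∧ c = c' + 1 := by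
  refine ⟨c - 1, fun a b hab => ?_, funext fun j => ?_⟩
  · have := hc hab
    have := hpos a
    simp only [Pi.sub_apply, Pi.one_apply]
    omega
  · have := hpos j
    simp only [Pi.add_apply, Pi.sub_apply, Pi.one_apply]
    omega

theorem det_binomMatrix_pos : ∀ {k : ℕ} {r c : Fin k → ℕ}, StrictMono r → StrictMono c →
    0 < det (binomMatrix r c)
  | 0, _, _, _, _ => by simp
  | k + 1, r, c, hr, hc => by
    -- inner induction on `c 0`: the case `c 0 > 0` lowers all of `c`, the case `c 0 = 0` lowers `k`
    suffices ∀ m (c : Fin (k + 1) → ℕ), StrictMono c → c 0 = m →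
        ∀ r : Fin (k + 1) → ℕ, StrictMono r → 0 < det (binomMatrix r c) from
      this _ c hc rfl r hr
    intro m
    induction m with
    | zero =>
      intro c hc h0 r hr
      obtain ⟨c', hc', htail⟩ := (hc.comp Fin.strictMono_succ).exists_eq_add_one
        fun j => h0 ▸ hc (Fin.succ_pos j)
      have hc_eq : c = Fin.cons 0 (c' + 1) := by
        rw [← h0, ← htail]
        exact (Fin.cons_self_tail c).symm
      rw [hc_eq, det_binomMatrix_cons_zero hr.monotone]
      exact det_pos_of_sum_rows _ _ (fun i => gapInterval_nonempty hr _)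
        (fun i j hij => lt_of_mem_gapInterval hr (Fin.succ_lt_succ_iff.2 hij))
        (fun f hf => det_binomMatrix_pos hf hc')
    | succ m ih =>
      intro c hc h0 r hr
      obtain ⟨c', hc', rfl⟩ := hc.exists_eq_add_one
        fun j => (Nat.succ_pos m).trans_le (h0.symm.trans_le (hc.monotone (Fin.zero_le j)))
      rw [det_binomMatrix_add_one hr.monotone]
      exact det_pos_of_sum_rows _ _ (gapInterval_nonempty hr)
        (fun i j => lt_of_mem_gapInterval hr) (ih c' hc' (by simpa using h0))

/-- For `x > 0` and `y > 0`, the generalized symmetric Pascal matrix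
`R_n[x,y]` is strictly totally positive. -/
theorem genSymPascal_strictlyTotallyPositive (n : ℕ) (x y : ℝ)
    (hx : 0 < x) (hy : 0 < y) :
    IsStrictlyTotallyPositive (genSymPascal n x y) := by
  intro k r c hr hc
  have hsub : (genSymPascal n x y).submatrix r c =
      of fun i j => y ^ (r i : ℕ) * (of fun i j => x ^ (c j : ℕ) *
        binomMatrix (fun i => (r i : ℕ)) (fun j => (c j : ℕ)) i j) i j := by
    ext i j
    simp only [submatrix_apply, of_apply, genSymPascal, binomMatrix, binomRow]
    ring
  rw [hsub, det_mul_column, det_mul_row]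
  exact mul_pos (prod_pos fun i _ => pow_pos hy _) <| mul_pos (prod_pos fun j _ => pow_pos hx _) <|
    det_binomMatrix_pos (Fin.val_strictMono.comp hr) (Fin.val_strictMono.comp hc)
end

section
/- Let n ∈ ℕ and x, y ∈ ℝ with xy > 0. Then the extended generalized symmetric Pascal matrix Ψ_n[x,y], the (n+1)×(n+1) real matrix with entries (Ψ_n[x,y])_{ij} = x^{i−j} y^{i+j−2} · binom(i+j−2, j−1), is strictly totally positive. -/
/-- The extended generalized symmetric Pascal matrix `Ψ_n[x,y]`, the
`(n+1)×(n+1)` real matrix with entries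
`(Ψ_n[x,y])_{ij} = x^{i−j}·y^{i+j−2}·binom(i+j−2, j−1)` (0-based indexing;
`x^{i−j}` is an integer power). -/
noncomputable def extGenSymPascal (n : ℕ) (x y : ℝ) :
    Matrix (Fin (n + 1)) (Fin (n + 1)) ℝ :=
  fun i j =>
    x ^ ((i : ℤ) - (j : ℤ)) * y ^ ((i : ℕ) + (j : ℕ)) *
      (((i : ℕ) + (j : ℕ)).choose (j : ℕ))

/-!
Up to the diagonal scalings `(x y)^i` on rows and `(y / x)^j` on columns, `Ψ_n[x,y]` is the
symmetric Pascal matrix `P i j = C(i + j, j)`, so it suffices that every minor of `P` with rows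
`r` and columns `c` is positive. After subtracting from each row the previous one, the
hockey-stick identity `C(r + c + 1, c + 1) = ∑_{a ≤ r} C(a + c, c)` writes row `i` of the minor
with columns `c + 1` as the sum of the rows `a ∈ (r (i-1), r i]` of the minor with columns `c`.
By multilinearity the determinant is then a nonempty sum of minors of `P` with strictly increasing
rows, which are positive by induction on `c 0`; when `c 0 = 0` the first column becomes `e₀` and
the size of the minor drops instead.
-/

open Matrix Finset

section RowExpansion

variable {R : Type*} [CommRing R] {n : Type*} [Fintype n] [DecidableEq n] {α : Type*}

theorem Matrix.det_of_sum_rows (K : α → n → R) (I : n → Finset α) :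
    det (of fun i j => ∑ a ∈ I i, K a j) =
      ∑ a ∈ Fintype.piFinset I, det (of fun i j => K (a i) j) := by
  have hrows : (of fun i j => ∑ a ∈ I i, K a j) = fun i => ∑ a ∈ I i, K a := by
    ext i j
    simp
  rw [hrows]
  exact (detRowAlternating : (n → R) [⋀^n]→ₗ[R] R).map_sum_finset (fun _ a => K a) I

theorem Matrix.det_of_sum_rows_pos [PartialOrder R] [IsStrictOrderedRing R] [Preorder n]
    [Preorder α] (K : α → n → R) (I : n → Finset α) (hI : ∀ i, (I i).Nonempty)
    (hsep : ∀ i j, i < j → ∀ a ∈ I i, ∀ b ∈ I j, a < b)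
    (hK : ∀ a : n → α, StrictMono a → 0 < det (of fun i j => K (a i) j)) :
    0 < det (of fun i j => ∑ a ∈ I i, K a j) := by
  rw [det_of_sum_rows]
  refine sum_pos (fun a ha => hK a fun i j hij => ?_) (Fintype.piFinset_nonempty.mpr hI)
  rw [Fintype.mem_piFinset] at ha
  exact hsep i j hij _ (ha i) _ (ha j)

end RowExpansion

def pascal (r c : ℕ) : ℝ := (r + c).choose c

theorem pascal_zero_right (r : ℕ) : pascal r 0 = 1 := by simp [pascal]

theorem sum_range_pascal (r c : ℕ) : ∑ a ∈ range (r + 1), pascal a c = pascal r (c + 1) := by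
  simp only [pascal]
  rw [← add_assoc]
  exact_mod_cast Nat.sum_range_add_choose r c

theorem pascal_succ_sub_pascal_succ {m r : ℕ} (h : m ≤ r) (c : ℕ) :
    pascal r (c + 1) - pascal m (c + 1) = ∑ a ∈ Ico (m + 1) (r + 1), pascal a c := by
  rw [sum_Ico_eq_sub _ (by omega), sum_range_pascal, sum_range_pascal]

theorem Matrix.det_eq_det_cons_sub {R : Type*} [CommRing R] {k : ℕ}
    (A : Matrix (Fin (k + 1)) (Fin (k + 1)) R) :
    det A = det (of (Fin.cons (A 0) fun i => A i.succ - A i.castSucc : Fin (k + 1) → _)) :=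
  det_eq_of_forall_row_eq_smul_add_pred (fun _ => 1) (fun _ => rfl) fun i j => by simp

/-- The intervals `[0, r 0], (r 0, r 1], …, (r (k-1), r k]`. -/
def cutBlock {k : ℕ} (r : Fin (k + 1) → ℕ) : Fin (k + 1) → Finset ℕ :=
  Fin.cons (range (r 0 + 1)) fun i => Ico (r i.castSucc + 1) (r i.succ + 1)

section cutBlock

variable {k : ℕ} {r : Fin (k + 1) → ℕ}

theorem le_of_mem_cutBlock {i : Fin (k + 1)} {a : ℕ} (ha : a ∈ cutBlock r i) : a ≤ r i := by
  cases i using Fin.cases <;> simp [cutBlock] at ha <;> omega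

theorem lt_of_mem_cutBlock_succ {i : Fin k} {a : ℕ} (ha : a ∈ cutBlock r i.succ) :
    r i.castSucc < a := by
  simp [cutBlock] at ha
  omega

theorem self_mem_cutBlock (hr : StrictMono r) (i : Fin (k + 1)) : r i ∈ cutBlock r i := by
  cases i using Fin.cases with
  | zero => simp [cutBlock]
  | succ i => simpa [cutBlock] using hr i.castSucc_lt_succ

theorem lt_of_mem_cutBlock_of_lt (hr : Monotone r) {i j : Fin (k + 1)} (hij : i < j) {a b : ℕ}
    (ha : a ∈ cutBlock r i) (hb : b ∈ cutBlock r j) : a < b := by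
  obtain ⟨j, rfl⟩ := Fin.exists_succ_eq.mpr (Fin.ne_zero_of_lt hij)
  calc a ≤ r i := le_of_mem_cutBlock ha
    _ ≤ r j.castSucc := hr (Fin.le_castSucc_iff.mpr hij)
    _ < b := lt_of_mem_cutBlock_succ hb

end cutBlock

theorem det_pascal_succ_eq {k : ℕ} {r : Fin (k + 1) → ℕ} (hr : Monotone r)
    (c : Fin (k + 1) → ℕ) :
    det (of fun i j => pascal (r i) (c j + 1)) =
      det (of fun i j => ∑ a ∈ cutBlock r i, pascal a (c j)) := by
  rw [det_eq_det_cons_sub]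
  congr 1
  ext i j
  cases i using Fin.cases with
  | zero => simp [cutBlock, sum_range_pascal]
  | succ i => simp [cutBlock, pascal_succ_sub_pascal_succ (hr i.castSucc_le_succ)]

theorem det_pascal_eq_of_zero {k : ℕ} {r : Fin (k + 1) → ℕ} (hr : Monotone r)
    {c : Fin (k + 1) → ℕ} {c' : Fin k → ℕ} (hc0 : c 0 = 0) (hc : ∀ j, c j.succ = c' j + 1) :
    det (of fun i j => pascal (r i) (c j)) =
      det (of fun i j => ∑ a ∈ cutBlock r i.succ, pascal a (c' j)) := by
  rw [det_eq_det_cons_sub, det_succ_column_zero, Fin.sum_univ_succ]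
  simp only [Fin.val_zero, pow_zero, of_apply, Fin.cons_zero, hc0, pascal_zero_right, mul_one,
    Fin.succAbove_zero, one_mul, Fin.cons_succ, Pi.sub_apply, sub_self, mul_zero, zero_mul,
    sum_const_zero, add_zero]
  congr 1
  ext i j
  simp [cutBlock, hc, pascal_succ_sub_pascal_succ (hr i.castSucc_le_succ)]

theorem det_pascal_pos {k : ℕ} {r c : Fin k → ℕ} (hr : StrictMono r) (hc : StrictMono c) :
    0 < det (of fun i j => pascal (r i) (c j)) := by
  induction k with
  | zero => simp
  | succ k ih =>
    induction hc0 : c 0 generalizing r c with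
    | zero =>
      have hc' : StrictMono fun j : Fin k => c j.succ - 1 := fun i j hij => by
        have := hc (Fin.succ_lt_succ_iff.mpr hij)
        have := hc (Fin.succ_pos i)
        dsimp only
        omega
      rw [det_pascal_eq_of_zero (c' := fun j => c j.succ - 1) hr.monotone hc0 fun j => by
        have := hc (Fin.succ_pos j)
        omega]
      exact det_of_sum_rows_pos _ _ (fun i => ⟨_, self_mem_cutBlock hr i.succ⟩)
        (fun i j hij _ ha _ hb =>
          lt_of_mem_cutBlock_of_lt hr.monotone (Fin.succ_lt_succ_iff.mpr hij) ha hb)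
        fun a ha => ih ha hc'
    | succ m ihm =>
      obtain ⟨c', rfl⟩ : ∃ c' : Fin (k + 1) → ℕ, c = fun j => c' j + 1 :=
        ⟨fun j => c j - 1, funext fun j => by
          have := hc.monotone (Fin.zero_le j)
          dsimp only
          omega⟩
      rw [det_pascal_succ_eq hr.monotone]
      exact det_of_sum_rows_pos _ _ (fun i => ⟨_, self_mem_cutBlock hr i⟩)
        (fun i j hij _ ha _ hb => lt_of_mem_cutBlock_of_lt hr.monotone hij ha hb)
        fun a ha =>
          ihm ha (fun i j hij => Nat.succ_lt_succ_iff.mp (hc hij)) (Nat.succ_injective hc0)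

theorem extGenSymPascal_apply {n : ℕ} {x : ℝ} (hx : x ≠ 0) (y : ℝ) (i j : Fin (n + 1)) :
    extGenSymPascal n x y i j = (x * y) ^ (i : ℕ) * pascal i j * (y / x) ^ (j : ℕ) := by
  rw [extGenSymPascal, pascal, zpow_sub₀ hx, zpow_natCast, zpow_natCast, div_pow, mul_pow,
    pow_add]
  field_simp

/-- For `xy > 0`, the extended generalized symmetric Pascal matrix
`Ψ_n[x,y]` is strictly totally positive. -/
theorem extGenSymPascal_strictlyTotallyPositive (n : ℕ) (x y : ℝ)
    (hxy : 0 < x * y) :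
    IsStrictlyTotallyPositive (extGenSymPascal n x y) := by
  intro k r c hr hc
  have hx : x ≠ 0 := left_ne_zero_of_mul hxy.ne'
  have hyx : 0 < y / x := by
    simpa [mul_div_mul_left _ _ hx] using div_pos hxy (mul_self_pos.mpr hx)
  have hminor : (extGenSymPascal n x y).submatrix r c =
      diagonal (fun i => (x * y) ^ (r i : ℕ)) * of (fun i j => pascal (r i) (c j)) *
        diagonal (fun j => (y / x) ^ (c j : ℕ)) := by
    ext i j
    simp [extGenSymPascal_apply hx]
  rw [hminor, det_mul, det_mul, det_diagonal, det_diagonal]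
  exact mul_pos (mul_pos (prod_pos fun i _ => pow_pos hxy _)
    (det_pascal_pos (fun _ _ h => hr h) (fun _ _ h => hc h))) (prod_pos fun j _ => pow_pos hyx _)
end
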